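/- arXiv:2510.11477 — 3 statements merged into one kernel-verified Lean document; each statement's English description precedes it below -/
import Mathlib

section
/- Let A be a complete discrete valuation ring with maximal ideal 𝔪. Fix integers e ≥ 0 and n ≥ m ≥ 1. Let f₁, …, f_m ∈ A[x₁, …, x_n] be polynomials and suppose a = (a₁, …, a_n) ∈ Aⁿ satisfies f_i(a) ∈ 𝔪^{2e+1} for all 1 ≤ i ≤ m. Suppose that the determinant of the m×m matrix ((∂f_i/∂x_j)(a))_{1 ≤ i,j ≤ m}, formed by the first m columns of the Jacobian matrix of (f₁,…,f_m) evaluated at a, does not lie in 𝔪^{e+1}. Then there exists a unique b = (b₁, …, b_n) ∈ Aⁿ such that f_i(b) = 0 for all 1 ≤ i ≤ m, b_i ≡ a_i mod 𝔪^{e+1} for 1 ≤ i ≤ m, and b_i = a_i for m+1 ≤ i ≤ n. (Note: a is only required to lie in Aⁿ, not in 𝔪ⁿ.) -/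
/-!
Newton's method in the first `m` coordinates. At every point congruent to `a` modulo
`𝔪^(e+1)` the Jacobian minor stays outside `𝔪^(e+1)`, so in the DVR the adjugate solves
`J h = v` with a loss of at most `e` in valuation. If `f x ∈ 𝔪^(2e+1+k)`, the correction
`h = -J⁻¹ f x` lies in `𝔪^(e+1+k)` and the second order Taylor expansion gives
`f (x + h) ∈ 𝔪^(2(e+1+k)) ⊆ 𝔪^(2e+2+k)`; the corrections converge by completeness.
If two such roots differ by `d ∈ 𝔪^(e+1+k)`, Taylor gives `J d ∈ 𝔪^(2(e+1+k))`, so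
`d ∈ 𝔪^(e+2+2k)`, and Krull's intersection theorem forces `d = 0`.
-/

open MvPolynomial Matrix Function

theorem Function.extend_zero_mem {R σ κ : Type*} [Semiring R] {I : Ideal R} {ι : κ → σ}
    {d : κ → R} (hd : ∀ l, d l ∈ I) (j : σ) : extend ι d 0 j ∈ I := by
  classical
  rw [extend_def]
  split_ifs
  exacts [hd _, zero_mem I]

theorem Function.eq_add_extend_comp_sub {R σ κ : Type*} [AddCommGroup R] {ι : κ → σ}
    (hι : Injective ι) {a b : σ → R} (h : ∀ j ∉ Set.range ι, b j = a j) :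
    b = a + extend ι ((b - a) ∘ ι) 0 := by
  funext j
  by_cases hj : j ∈ Set.range ι
  · obtain ⟨l, rfl⟩ := hj
    simp [hι.extend_apply]
  · simp [extend_apply' _ _ _ hj, h j hj]

theorem Matrix.mulVec_extend_zero {R σ κ ν : Type*} [NonUnitalNonAssocSemiring R] [Fintype σ]
    [Fintype κ] (M : Matrix ν σ R) {ι : κ → σ} (hι : Injective ι) (v : κ → R) :
    M *ᵥ extend ι v 0 = M.submatrix id ι *ᵥ v := by
  ext i
  refine (Fintype.sum_of_injective ι hι _ _ (fun j hj => ?_) fun l => ?_).symm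
  · rw [extend_apply' _ _ _ (by simpa using hj), Pi.zero_apply, mul_zero]
  · rw [hι.extend_apply]
    rfl

theorem Matrix.det_sub_det_mem {R κ : Type*} [CommRing R] [Fintype κ] [DecidableEq κ]
    {I : Ideal R} (M N : Matrix κ κ R) (h : ∀ i j, M i j - N i j ∈ I) : M.det - N.det ∈ I := by
  rw [← Ideal.Quotient.eq, RingHom.map_det, RingHom.map_det]
  congr 1
  ext i j
  exact Ideal.Quotient.eq.mpr (h i j)

theorem IsHausdorff.eq_of_forall_sub_mem_pow {R : Type*} [CommRing R] {I : Ideal R}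
    [IsHausdorff I R] {x y : R} (h : ∀ k, x - y ∈ I ^ k) : x = y :=
  (IsHausdorff.eq_iff_smodEq (I := I)).mpr fun k => by
    rw [SModEq.sub_mem, smul_eq_mul, Ideal.mul_top]
    exact h k

theorem IsPrecomplete.exists_forall_sub_mem_pow {R : Type*} [CommRing R] {I : Ideal R}
    [IsPrecomplete I R] {x : ℕ → R} (hx : ∀ k, x (k + 1) - x k ∈ I ^ k) :
    ∃ L, ∀ k, x k - L ∈ I ^ k := by
  have hcauchy : ∀ {k l}, k ≤ l → x l - x k ∈ I ^ k := by
    intro k l hkl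
    induction l, hkl using Nat.le_induction with
    | base => simp
    | succ l hkl ih =>
      rw [← sub_add_sub_cancel]
      exact add_mem (Ideal.pow_le_pow_right hkl (hx l)) ih
  obtain ⟨L, hL⟩ := IsPrecomplete.prec ‹_› (I := I) fun hkl => by
    rw [SModEq.comm, SModEq.sub_mem, smul_eq_mul, Ideal.mul_top]
    exact hcauchy hkl
  refine ⟨L, fun k => ?_⟩
  simpa only [SModEq.sub_mem, smul_eq_mul, Ideal.mul_top] using hL k

theorem IsPrecomplete.exists_forall_exists_sub_mem_pow_of_step {R κ : Type*} [CommRing R]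
    {I : Ideal R} [IsPrecomplete I R] (P : ℕ → (κ → R) → Prop) {d₀ : κ → R} (h₀ : P 0 d₀)
    (hstep : ∀ k d, P k d → ∃ d', P (k + 1) d' ∧ ∀ l, d' l - d l ∈ I ^ k) :
    ∃ D : κ → R, ∀ k, ∃ d, P k d ∧ ∀ l, d l - D l ∈ I ^ k := by
  choose! next hnext hdiff using hstep
  let d : ℕ → κ → R := fun k => Nat.rec d₀ next k
  have hd : ∀ k, P k (d k) := by
    intro k
    induction k with
    | zero => exact h₀
    | succ k ih => exact hnext k _ ih
  choose D hD using fun l =>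
    IsPrecomplete.exists_forall_sub_mem_pow (I := I) (x := fun k => d k l)
      fun k => hdiff k _ (hd k) l
  exact ⟨D, fun k => ⟨d k, hd k, fun l => hD l k⟩⟩

namespace MvPolynomial

variable {R σ κ ν : Type*} [CommRing R]

theorem eval_sub_eval_mem {I : Ideal R} (p : MvPolynomial σ R) {x y : σ → R}
    (h : ∀ j, x j - y j ∈ I) : eval x p - eval y p ∈ I := by
  have hmk : ∀ z : σ → R, Ideal.Quotient.mk I (eval z p)
      = eval₂ (Ideal.Quotient.mk I) (Ideal.Quotient.mk I ∘ z) p := fun z => by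
    rw [eval, coe_eval₂Hom, eval₂_comp_left, RingHom.comp_id]
  have hxy : Ideal.Quotient.mk I ∘ x = Ideal.Quotient.mk I ∘ y :=
    _root_.funext fun j => Ideal.Quotient.eq.mpr (h j)
  rw [← Ideal.Quotient.eq, hmk, hmk, hxy]

theorem eval_add_sub_eval_sub_sum_mem_sq [Fintype σ] {I : Ideal R} (p : MvPolynomial σ R)
    (x h : σ → R) (hh : ∀ j, h j ∈ I) :
    eval (x + h) p - eval x p - ∑ j, eval x (pderiv j p) * h j ∈ I ^ 2 := by
  classical
  induction p using MvPolynomial.induction_on with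
  | C c => simp
  | add p q hp hq =>
    convert add_mem hp hq using 1
    simp only [map_add, add_mul, Finset.sum_add_distrib]
    ring
  | mul_X p i hp =>
    set L := ∑ j, eval x (pderiv j p) * h j
    have hL : L ∈ I := Ideal.sum_mem _ fun j _ => Ideal.mul_mem_left _ _ (hh j)
    have hlin : ∑ j, eval x (pderiv j (p * X i)) * h j = L * x i + eval x p * h i := by
      simp only [pderiv_mul, pderiv_X, map_add, map_mul, eval_X, add_mul, Finset.sum_add_distrib,
        L, Finset.sum_mul, Pi.single_apply, mul_ite, mul_one, mul_zero, apply_ite (eval x),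
        ite_mul, map_zero, zero_mul, Finset.sum_ite_eq, Finset.mem_univ, if_true, mul_right_comm]
    have hquad : L * h i ∈ I ^ 2 := by
      rw [sq]
      exact Ideal.mul_mem_mul hL (hh i)
    rw [hlin]
    convert add_mem (Ideal.mul_mem_right (x i + h i) _ hp) hquad using 1
    simp only [map_mul, eval_X, Pi.add_apply]
    ring

noncomputable def jacobianAt (f : ν → MvPolynomial σ R) (x : σ → R) : Matrix ν σ R :=
  Matrix.of fun i j => eval x (pderiv j (f i))

theorem eval_add_extend_sub_eval_sub_mulVec_mem_sq [Fintype σ] [Fintype κ] {I : Ideal R}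
    {ι : κ → σ} (hι : Injective ι) (f : ν → MvPolynomial σ R) (x : σ → R) {d : κ → R}
    (hd : ∀ l, d l ∈ I) (i : ν) :
    eval (x + extend ι d 0) (f i) - eval x (f i) - ((jacobianAt f x).submatrix id ι *ᵥ d) i
      ∈ I ^ 2 := by
  rw [← Matrix.mulVec_extend_zero _ hι]
  exact eval_add_sub_eval_sub_sum_mem_sq (f i) x _ (extend_zero_mem hd)

theorem det_jacobianAt_add_extend_notMem [Fintype κ] [DecidableEq κ] {I : Ideal R}
    (ι : κ → σ) (f : κ → MvPolynomial σ R) {a : σ → R} {d : κ → R} (hd : ∀ l, d l ∈ I)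
    (ha : ((jacobianAt f a).submatrix id ι).det ∉ I) :
    ((jacobianAt f (a + extend ι d 0)).submatrix id ι).det ∉ I := by
  intro had
  have hsub := det_sub_det_mem ((jacobianAt f (a + extend ι d 0)).submatrix id ι)
    ((jacobianAt f a).submatrix id ι) fun i j =>
      eval_sub_eval_mem (pderiv (ι j) (f i)) fun j => by simpa using extend_zero_mem hd j
  exact ha (by simpa only [sub_sub_cancel] using I.sub_mem had hsub)

end MvPolynomial

namespace IsDiscreteValuationRing

variable {A κ : Type*} [CommRing A] [IsDomain A] [IsDiscreteValuationRing A]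

local notation "𝔪" => IsLocalRing.maximalIdeal A

theorem maximalIdeal_pow_le_of_not_le {J : Ideal A} {e : ℕ}
    (h : ¬J ≤ 𝔪 ^ (e + 1)) : 𝔪 ^ e ≤ J := by
  obtain ⟨ϖ, hϖ⟩ := exists_irreducible A
  have hJ : J ≠ ⊥ := by
    rintro rfl
    exact h bot_le
  obtain ⟨d, rfl⟩ := ideal_eq_span_pow_irreducible hJ hϖ
  simp only [hϖ.maximalIdeal_eq, Ideal.span_singleton_pow,
    Ideal.span_singleton_le_span_singleton] at h ⊢
  exact pow_dvd_pow ϖ (not_lt.mp fun hed => h (pow_dvd_pow ϖ hed))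

variable [Fintype κ] [DecidableEq κ]

theorem exists_mulVec_eq_of_det_notMem {M : Matrix κ κ A} {e N : ℕ}
    (hM : M.det ∉ 𝔪 ^ (e + 1)) {v : κ → A}
    (hv : ∀ i, v i ∈ 𝔪 ^ (N + e)) :
    ∃ w : κ → A, (∀ i, w i ∈ 𝔪 ^ N) ∧ M *ᵥ w = v := by
  have hdiv : 𝔪 ^ (N + e) ≤ 𝔪 ^ N * Ideal.span {M.det} := by
    rw [pow_add]
    exact Ideal.mul_mono_right
      (maximalIdeal_pow_le_of_not_le (by rwa [Ideal.span_singleton_le_iff_mem]))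
  choose w hwN hw using fun i => Ideal.mem_mul_span_singleton.mp
    (hdiv (Ideal.sum_mem _ fun j _ => Ideal.mul_mem_left _ (M.adjugate i j) (hv j)))
  refine ⟨w, hwN, ?_⟩
  have hdet : M.det ≠ 0 := fun h0 => hM (h0 ▸ zero_mem _)
  apply smul_right_injective (κ → A) hdet
  have hadj : M.det • w = M.adjugate *ᵥ v := _root_.funext fun i => (mul_comm _ _).trans (hw i)
  change M.det • (M *ᵥ w) = M.det • v
  rw [← mulVec_smul, hadj, mulVec_mulVec, mul_adjugate, smul_mulVec, one_mulVec]

theorem mem_pow_of_mulVec_mem {M : Matrix κ κ A} {e N : ℕ}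
    (hM : M.det ∉ 𝔪 ^ (e + 1)) {w : κ → A}
    (hw : ∀ i, (M *ᵥ w) i ∈ 𝔪 ^ (N + e)) (i : κ) : w i ∈ 𝔪 ^ N := by
  obtain ⟨w', hw'N, hw'⟩ := exists_mulVec_eq_of_det_notMem hM hw
  rw [← mulVec_injective_of_det_ne_zero (fun h0 => hM (h0 ▸ zero_mem _)) hw']
  exact hw'N i

end IsDiscreteValuationRing

section Newton

open IsDiscreteValuationRing

variable {A σ κ : Type*} [CommRing A] [IsDomain A] [IsDiscreteValuationRing A] [Fintype σ]
  [Fintype κ] [DecidableEq κ] {ι : κ → σ} (f : κ → MvPolynomial σ A)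
  {e : ℕ}

local notation "𝔪" => IsLocalRing.maximalIdeal A

theorem exists_newton_step (hι : Injective ι) {x : σ → A} {k : ℕ}
    (hx : ((jacobianAt f x).submatrix id ι).det ∉ 𝔪 ^ (e + 1))
    (hfx : ∀ i, eval x (f i) ∈ 𝔪 ^ (2 * e + 1 + k)) :
    ∃ h : κ → A, (∀ l, h l ∈ 𝔪 ^ (e + 1 + k)) ∧
      ∀ i, eval (x + extend ι h 0) (f i) ∈ 𝔪 ^ (2 * e + 1 + (k + 1)) := by
  obtain ⟨h, hh, hJh⟩ := exists_mulVec_eq_of_det_notMem hx (N := e + 1 + k)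
    (v := fun i => -eval x (f i)) fun i => by
      rw [show e + 1 + k + e = 2 * e + 1 + k by ring]
      exact neg_mem (hfx i)
  refine ⟨h, hh, fun i => ?_⟩
  have htaylor := eval_add_extend_sub_eval_sub_mulVec_mem_sq hι f x hh i
  rw [hJh, ← pow_mul, sub_neg_eq_add, sub_add_cancel] at htaylor
  exact Ideal.pow_le_pow_right (by omega) htaylor

theorem mem_pow_succ_of_eval_eq_zero (hι : Injective ι) {x : σ → A} {d : κ → A} {k : ℕ}
    (hx : ((jacobianAt f x).submatrix id ι).det ∉ 𝔪 ^ (e + 1))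
    (hd : ∀ l, d l ∈ 𝔪 ^ (e + 1 + k)) (hfx : ∀ i, eval x (f i) = 0)
    (hfxd : ∀ i, eval (x + extend ι d 0) (f i) = 0) (l : κ) :
    d l ∈ 𝔪 ^ (e + 1 + (k + 1)) := by
  have hJd : ∀ i, ((jacobianAt f x).submatrix id ι *ᵥ d) i ∈ 𝔪 ^ (e + 2 + 2 * k + e) := by
    intro i
    have htaylor := eval_add_extend_sub_eval_sub_mulVec_mem_sq hι f x hd i
    rw [hfx, hfxd, sub_self, zero_sub, neg_mem_iff, ← pow_mul] at htaylor
    rwa [show e + 2 + 2 * k + e = (e + 1 + k) * 2 by ring]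
  exact Ideal.pow_le_pow_right (by omega) (mem_pow_of_mulVec_mem hx hJd l)

theorem eq_of_eval_add_extend_eq_zero (hι : Injective ι) {a : σ → A}
    (hjac : ((jacobianAt f a).submatrix id ι).det ∉ 𝔪 ^ (e + 1))
    {d₁ d₂ : κ → A} (hd₁ : ∀ l, d₁ l ∈ 𝔪 ^ (e + 1)) (hd₂ : ∀ l, d₂ l ∈ 𝔪 ^ (e + 1))
    (hf₁ : ∀ i, eval (a + extend ι d₁ 0) (f i) = 0)
    (hf₂ : ∀ i, eval (a + extend ι d₂ 0) (f i) = 0) : d₁ = d₂ := by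
  have hsplit : a + extend ι d₁ 0 + extend ι (d₂ - d₁) 0 = a + extend ι d₂ 0 := by
    rw [add_assoc, ← extend_add, add_sub_cancel, add_zero]
  have hclose : ∀ k l, (d₂ - d₁) l ∈ 𝔪 ^ (e + 1 + k) := by
    intro k
    induction k with
    | zero => exact fun l => sub_mem (hd₂ l) (hd₁ l)
    | succ k ih =>
      exact mem_pow_succ_of_eval_eq_zero f hι (det_jacobianAt_add_extend_notMem ι f hd₁ hjac)
        ih hf₁ (by rwa [hsplit])
  funext l
  exact (IsHausdorff.eq_of_forall_sub_mem_pow (I := 𝔪) fun k =>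
    Ideal.pow_le_pow_right (by omega) (hclose k l)).symm

theorem exists_eval_add_extend_eq_zero [IsAdicComplete 𝔪 A] (hι : Injective ι)
    {a : σ → A} (ha : ∀ i, eval a (f i) ∈ 𝔪 ^ (2 * e + 1))
    (hjac : ((jacobianAt f a).submatrix id ι).det ∉ 𝔪 ^ (e + 1)) :
    ∃ d : κ → A, (∀ l, d l ∈ 𝔪 ^ (e + 1)) ∧ ∀ i, eval (a + extend ι d 0) (f i) = 0 := by
  obtain ⟨D, hD⟩ := IsPrecomplete.exists_forall_exists_sub_mem_pow_of_step (I := 𝔪)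
    (fun k d => (∀ l, d l ∈ 𝔪 ^ (e + 1)) ∧
      ∀ i, eval (a + extend ι d 0) (f i) ∈ 𝔪 ^ (2 * e + 1 + k))
    (d₀ := 0) ⟨fun _ => zero_mem _, by simpa [extend_zero] using ha⟩ fun k d ⟨hd, hfd⟩ => by
      obtain ⟨h, hh, hfh⟩ :=
        exists_newton_step f hι (det_jacobianAt_add_extend_notMem ι f hd hjac) hfd
      have hsplit : a + extend ι (d + h) 0 = a + extend ι d 0 + extend ι h 0 := by
        rw [add_assoc, ← extend_add, add_zero]
      refine ⟨d + h, ⟨fun l => add_mem (hd l) (Ideal.pow_le_pow_right (by omega) (hh l)),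
        by rwa [hsplit]⟩, fun l => ?_⟩
      simpa using Ideal.pow_le_pow_right (by omega) (hh l)
  refine ⟨D, fun l => ?_, fun i => IsHausdorff.eq_of_forall_sub_mem_pow (I := 𝔪) fun k => ?_⟩
  · obtain ⟨d, ⟨hd, -⟩, hdD⟩ := hD (e + 1)
    simpa using sub_mem (hd l) (hdD l)
  · obtain ⟨d, ⟨-, hfd⟩, hdD⟩ := hD k
    have hdiff : a + extend ι d 0 - (a + extend ι D 0) = extend ι (d - D) 0 := by
      rw [add_sub_add_left_eq_sub, ← extend_sub, sub_zero]
    have hcong := eval_sub_eval_mem (f i) (x := a + extend ι d 0) (y := a + extend ι D 0)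
      fun j => by
        rw [← Pi.sub_apply, hdiff]
        exact extend_zero_mem hdD j
    simpa using sub_mem (Ideal.pow_le_pow_right (by omega) (hfd i)) hcong

theorem existsUnique_eval_add_extend_eq_zero [IsAdicComplete 𝔪 A] (hι : Injective ι)
    {a : σ → A} (ha : ∀ i, eval a (f i) ∈ 𝔪 ^ (2 * e + 1))
    (hjac : ((jacobianAt f a).submatrix id ι).det ∉ 𝔪 ^ (e + 1)) :
    ∃! d : κ → A, (∀ l, d l ∈ 𝔪 ^ (e + 1)) ∧ ∀ i, eval (a + extend ι d 0) (f i) = 0 := by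
  obtain ⟨D, hD, hroot⟩ := exists_eval_add_extend_eq_zero f hι ha hjac
  exact ⟨D, ⟨hD, hroot⟩, fun d ⟨hd, hfd⟩ => eq_of_eval_add_extend_eq_zero f hι hjac hd hD hfd hroot⟩

end Newton

theorem multivariate_hensel_general
    {A : Type*} [CommRing A] [IsDomain A] [IsDiscreteValuationRing A]
    [IsAdicComplete (IsLocalRing.maximalIdeal A) A]
    (e m n : ℕ) (hmn : m ≤ n)
    (f : Fin m → MvPolynomial (Fin n) A) (a : Fin n → A)
    (ha : ∀ i : Fin m,
      MvPolynomial.eval a (f i) ∈ (IsLocalRing.maximalIdeal A) ^ (2 * e + 1))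
    (hjac : (Matrix.of fun i j : Fin m =>
        MvPolynomial.eval a (MvPolynomial.pderiv (Fin.castLE hmn j) (f i))).det ∉
        (IsLocalRing.maximalIdeal A) ^ (e + 1)) :
    ∃! b : Fin n → A,
      (∀ i : Fin m, MvPolynomial.eval b (f i) = 0) ∧
      (∀ i : Fin n, (i : ℕ) < m → b i - a i ∈ (IsLocalRing.maximalIdeal A) ^ (e + 1)) ∧
      (∀ i : Fin n, m ≤ (i : ℕ) → b i = a i) := by
  obtain ⟨d, ⟨hd, hroot⟩, huniq⟩ :=
    existsUnique_eval_add_extend_eq_zero f (Fin.castLE_injective hmn) ha hjac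
  have hrange : ∀ j : Fin n, j ∈ Set.range (Fin.castLE hmn) ↔ (j : ℕ) < m := by
    simp [Fin.range_castLE]
  refine ⟨a + extend (Fin.castLE hmn) d 0,
    ⟨hroot, fun j _ => by simpa using extend_zero_mem hd j, fun j hj => ?_⟩, ?_⟩
  · have hj' : j ∉ Set.range (Fin.castLE hmn) := by simpa [hrange] using hj
    simp [extend_apply' _ _ _ hj']
  · rintro b ⟨hb, hba, hbtail⟩
    have hb_eq := eq_add_extend_comp_sub (Fin.castLE_injective hmn) (a := a) (b := b)
      fun j hj => hbtail j (by simpa [hrange] using hj)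
    rw [hb_eq, huniq ((b - a) ∘ Fin.castLE hmn)
      ⟨fun l => hba (Fin.castLE hmn l) (by simp), hb_eq ▸ hb⟩]

/-- **Multivariate Hensel's Lemma.** Let `A` be a complete discrete valuation ring with
maximal ideal `𝔪`. Fix integers `e ≥ 0` and `n ≥ m ≥ 1`, polynomials
`f₁, …, f_m ∈ A[x₁, …, x_n]` and a point `a ∈ Aⁿ` with `f i a ∈ 𝔪^(2e+1)` for all `i`.
If the determinant of the `m × m` matrix formed by the first `m` columns of the Jacobian
of `f` at `a` does not lie in `𝔪^(e+1)`, then there is a unique `b ∈ Aⁿ` with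
`f i b = 0` for all `i`, `b i ≡ a i mod 𝔪^(e+1)` for the first `m` coordinates, and
`b i = a i` for the remaining coordinates. -/
theorem multivariate_hensel
    {A : Type*} [CommRing A] [IsDomain A] [IsDiscreteValuationRing A]
    [IsAdicComplete (IsLocalRing.maximalIdeal A) A]
    (e m n : ℕ) (hm : 1 ≤ m) (hmn : m ≤ n)
    (f : Fin m → MvPolynomial (Fin n) A) (a : Fin n → A)
    (ha : ∀ i : Fin m,
      MvPolynomial.eval a (f i) ∈ (IsLocalRing.maximalIdeal A) ^ (2 * e + 1))
    (hjac : (Matrix.of fun i j : Fin m =>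
        MvPolynomial.eval a (MvPolynomial.pderiv (Fin.castLE hmn j) (f i))).det ∉
        (IsLocalRing.maximalIdeal A) ^ (e + 1)) :
    ∃! b : Fin n → A,
      (∀ i : Fin m, MvPolynomial.eval b (f i) = 0) ∧
      (∀ i : Fin n, (i : ℕ) < m → b i - a i ∈ (IsLocalRing.maximalIdeal A) ^ (e + 1)) ∧
      (∀ i : Fin n, m ≤ (i : ℕ) → b i = a i) :=
  multivariate_hensel_general e m n hmn f a ha hjac
end

section
/- Let R be a commutative ring and let Q be a quadratic form on the free module R³ with basis e₁, e₂, e₃ satisfying Q(e₁) = A, Q(e₂) = B, Q(e₃) = C, and with polar form values polar(e₁,e₂) = D, polar(e₁,e₃) = E, polar(e₂,e₃) = F (so the Gram matrix of the polar form is [[2A, D, E], [D, 2B, F], [E, F, 2C]]). In the Clifford algebra Cl(Q) (with defining relation ι(x)·ι(x) = Q(x)·1), set i = ι(e₂)·ι(e₃), j = ι(e₃)·ι(e₁), k = ι(e₁)·ι(e₂), and for x₁, x₂, x₃, x₄ ∈ R set u = x₁·1 + x₂·i + x₃·j + x₄·k. Then u · reverse(u) = (x₁² + F·x₁x₂ +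 E·x₁x₃ + D·x₁x₄ + BC·x₂² + (EF − CD)·x₂x₃ + (DF − BE)·x₂x₄ + AC·x₃² + (ED − AF)·x₃x₄ + AB·x₄²)·1, where reverse is the reversal anti-automorphism of the Clifford algebra (determined by reverse(ι(x)) = ι(x) and reverse(uv) = reverse(v)·reverse(u)). -/
open CliffordAlgebra

/-- **The quaternion norm form of the even Clifford algebra of a rank-3 quadratic module.**
Let `Q` be a quadratic form on `R³` with `Q e₁ = A`, `Q e₂ = B`, `Q e₃ = C` and polar values
`polar(e₁,e₂) = D`, `polar(e₁,e₃) = E`, `polar(e₂,e₃) = F`.  With `i = ι e₂ * ι e₃`,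
`j = ι e₃ * ι e₁`, `k = ι e₁ * ι e₂` and `u = x₁ + x₂ i + x₃ j + x₄ k` in the Clifford
algebra, one has
`u * reverse u = x₁² + F x₁x₂ + E x₁x₃ + D x₁x₄ + BC x₂² + (EF − CD) x₂x₃`
`+ (DF − BE) x₂x₄ + AC x₃² + (ED − AF) x₃x₄ + AB x₄²` (as a scalar). -/
theorem clifford_even_norm_form
    {R : Type*} [CommRing R]
    (Q : QuadraticForm R (Fin 3 → R))
    (A B C D E F : R)
    (hA : Q (Pi.single 0 1) = A) (hB : Q (Pi.single 1 1) = B) (hC : Q (Pi.single 2 1) = C)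
    (hD : QuadraticMap.polar (⇑Q) (Pi.single 0 1) (Pi.single 1 1) = D)
    (hE : QuadraticMap.polar (⇑Q) (Pi.single 0 1) (Pi.single 2 1) = E)
    (hF : QuadraticMap.polar (⇑Q) (Pi.single 1 1) (Pi.single 2 1) = F)
    (x₁ x₂ x₃ x₄ : R)
    (i j k u : CliffordAlgebra Q)
    (hi : i = ι Q (Pi.single 1 1) * ι Q (Pi.single 2 1))
    (hj : j = ι Q (Pi.single 2 1) * ι Q (Pi.single 0 1))
    (hk : k = ι Q (Pi.single 0 1) * ι Q (Pi.single 1 1))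
    (hu : u = algebraMap R (CliffordAlgebra Q) x₁ + x₂ • i + x₃ • j + x₄ • k) :
    u * reverse u =
      algebraMap R (CliffordAlgebra Q)
        (x₁ ^ 2 + F * (x₁ * x₂) + E * (x₁ * x₃) + D * (x₁ * x₄) + B * C * x₂ ^ 2
          + (E * F - C * D) * (x₂ * x₃) + (D * F - B * E) * (x₂ * x₄) + A * C * x₃ ^ 2
          + (E * D - A * F) * (x₃ * x₄) + A * B * x₄ ^ 2) := by
  subst hu hi hj hk
  simp only [map_add, reverse.commutes, LinearMap.map_smul, reverse.map_mul, reverse_ι]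
  set a := ι Q (Pi.single (0 : Fin 3) 1) with ha'
  set b := ι Q (Pi.single (1 : Fin 3) 1) with hb'
  set c := ι Q (Pi.single (2 : Fin 3) 1) with hc'
  have haa : ∀ x : CliffordAlgebra Q, a * (a * x) = A • x := fun x => by
    rw [← mul_assoc, ha', ι_sq_scalar, hA, Algebra.smul_def]
  have hbb : ∀ x : CliffordAlgebra Q, b * (b * x) = B • x := fun x => by
    rw [← mul_assoc, hb', ι_sq_scalar, hB, Algebra.smul_def]
  have hcc : ∀ x : CliffordAlgebra Q, c * (c * x) = C • x := fun x => by
    rw [← mul_assoc, hc', ι_sq_scalar, hC, Algebra.smul_def]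
  have hba : ∀ x : CliffordAlgebra Q, b * (a * x) = D • x - a * (b * x) := fun x => by
    rw [← mul_assoc, ← mul_assoc, hb', ha', ι_mul_ι_comm, QuadraticMap.polar_comm, hD,
      sub_mul, Algebra.smul_def]
  have hca : ∀ x : CliffordAlgebra Q, c * (a * x) = E • x - a * (c * x) := fun x => by
    rw [← mul_assoc, ← mul_assoc, hc', ha', ι_mul_ι_comm, QuadraticMap.polar_comm, hE,
      sub_mul, Algebra.smul_def]
  have hcb : ∀ x : CliffordAlgebra Q, c * (b * x) = F • x - b * (c * x) := fun x => by
    rw [← mul_assoc, ← mul_assoc, hc', hb', ι_mul_ι_comm, QuadraticMap.polar_comm, hF,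
      sub_mul, Algebra.smul_def]
  have haa' : a * a = A • (1 : CliffordAlgebra Q) := by simpa using haa 1
  have hbb' : b * b = B • (1 : CliffordAlgebra Q) := by simpa using hbb 1
  have hcc' : c * c = C • (1 : CliffordAlgebra Q) := by simpa using hcc 1
  have hba' : b * a = D • (1 : CliffordAlgebra Q) - a * b := by simpa using hba 1
  have hca' : c * a = E • (1 : CliffordAlgebra Q) - a * c := by simpa using hca 1
  have hcb' : c * b = F • (1 : CliffordAlgebra Q) - b * c := by simpa using hcb 1
  simp only [Algebra.algebraMap_eq_smul_one]
  simp only [mul_assoc, smul_mul_assoc, mul_smul_comm, smul_smul, mul_one, one_mul,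
    mul_sub, mul_add, sub_mul, add_mul, smul_sub, smul_add,
    haa, hbb, hcc, hba, hca, hcb, haa', hbb', hcc', hba', hca', hcb']
  module
end

section
/- Let Π = ℤ³ be equipped with a nondegenerate symmetric bilinear form ⟨·,·⟩ (Gram matrix a symmetric 3×3 integer matrix with nonzero determinant), extended ℚ-bilinearly to ℚ³, and let Π^∨ = {v ∈ ℚ³ : ⟨v, x⟩ ∈ ℤ for all x ∈ ℤ³} be the dual lattice. Let n ≥ 1 and let w : Π → ℤ/nℤ be a group homomorphism whose order in the group Hom(Π, ℤ/nℤ) is exactly n. Then there exists a primitive element v ∈ Π^∨ (i.e. v ≠ 0 and v/p ∉ Π^∨ for every prime p) such that w(x) = ⟨v, x⟩ mod n for all x ∈ Π. -/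
/-!
Write `w x = ∑ aᵢ xᵢ mod n`. Exact order `n` means `gcd(a₀, a₁, a₂, n) = 1`, and such a vector
can be moved modulo `n` to a primitive integer vector `c`: make the gcd `d` of all but the last
coordinate nonzero, then lift the last coordinate to a residue coprime to `d`, using that
`(ℤ/d)ˣ → (ℤ/gcd(n,d))ˣ` is onto together with the Chinese remainder theorem.
Then `v = S⁻¹c` pairs with `x` as `c ⬝ᵥ x`, so it lies in the dual lattice, represents `w`,
and is primitive because `c` is.
-/

open Matrix Finset

theorem Nat.exists_modEq_coprime {n d a : ℕ} (hd : d ≠ 0) (h : a.Coprime (n.gcd d)) :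
    ∃ c, c ≡ a [MOD n] ∧ c.Coprime d := by
  have : NeZero d := ⟨hd⟩
  obtain ⟨u, hu⟩ := ZMod.unitsMap_surjective (Nat.gcd_dvd_right n d) (ZMod.unitOfCoprime a h)
  have hua : (u : ZMod d).val ≡ a [MOD n.gcd d] := by
    rw [← ZMod.natCast_eq_natCast_iff, ← ZMod.cast_eq_val,
      ← ZMod.unitsMap_val (Nat.gcd_dvd_right n d), hu]
    rfl
  obtain ⟨c, hca, hcu⟩ := Nat.chineseRemainder' hua.symm
  exact ⟨c, hca, hcu.gcd_eq.trans (ZMod.val_coe_unit_coprime u)⟩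

theorem Nat.gcd_finset_gcd_eq_of_modEq {ι : Type*} {s : Finset ι} {n : ℕ} {f g : ι → ℕ}
    (h : ∀ i ∈ s, f i ≡ g i [MOD n]) : n.gcd (s.gcd f) = n.gcd (s.gcd g) := by
  have key : ∀ f g : ι → ℕ, (∀ i ∈ s, f i ≡ g i [MOD n]) →
      n.gcd (s.gcd f) ∣ n.gcd (s.gcd g) :=
    fun f g h => Nat.dvd_gcd (Nat.gcd_dvd_left _ _) <| Finset.dvd_gcd fun i hi =>
      ((h i hi).dvd_iff (Nat.gcd_dvd_left _ _)).mp
        ((Nat.gcd_dvd_right _ _).trans (Finset.gcd_dvd hi))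
  exact Nat.dvd_antisymm (key f g h) (key g f fun i hi => (h i hi).symm)

theorem Nat.exists_modEq_and_univ_gcd_eq_one {ι : Type*} [Fintype ι] [DecidableEq ι]
    [Nontrivial ι] {n : ℕ} (hn : n ≠ 0) (a : ι → ℕ) (h : (univ.gcd a).Coprime n) :
    ∃ c : ι → ℕ, (∀ i, c i ≡ a i [MOD n]) ∧ univ.gcd c = 1 := by
  obtain ⟨i₀, l, hne⟩ := exists_pair_ne ι
  set J := univ.erase l
  have hJ : insert l J = univ := insert_erase (mem_univ l)
  -- Adding `n` at `i₀ ∈ J` keeps the residues and makes the gcd over `J` nonzero.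
  set a' := Function.update a i₀ (a i₀ + n)
  have ha' : ∀ i, a' i ≡ a i [MOD n] := by
    intro i
    rcases eq_or_ne i i₀ with rfl | hi
    · simp [a']
    · simp only [a', Function.update_of_ne hi]; rfl
  have hd : J.gcd a' ≠ 0 := fun h0 => by
    simpa [a', hn] using Finset.gcd_eq_zero_iff.mp h0 i₀ (mem_erase.mpr ⟨hne, mem_univ _⟩)
  have hal : (a l).Coprime (n.gcd (J.gcd a')) := by
    rw [Nat.gcd_finset_gcd_eq_of_modEq fun i _ => ha' i]
    rw [← hJ, Finset.gcd_insert, gcd_eq_nat_gcd] at h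
    simpa [Nat.Coprime, Nat.gcd_comm, Nat.gcd_assoc, Nat.gcd_left_comm] using h
  obtain ⟨cl, hcl, hcop⟩ := Nat.exists_modEq_coprime hd hal
  refine ⟨Function.update a' l cl, fun i => ?_, ?_⟩
  · rcases eq_or_ne i l with rfl | hi
    · simpa using hcl
    · simpa [hi] using ha' i
  · rw [← hJ, Finset.gcd_insert, Function.update_self,
      Finset.gcd_congr rfl fun i hi => Function.update_of_ne (ne_of_mem_erase hi) _ _]
    exact hcop

theorem AddMonoidHom.coprime_gcd_val_of_addOrderOf_eq {ι : Type*} [Fintype ι] [DecidableEq ι]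
    {n : ℕ} [NeZero n] (w : (ι → ℤ) →+ ZMod n) (hw : addOrderOf w = n) :
    (univ.gcd fun i => (w (Pi.single i 1)).val).Coprime n := by
  set g := (univ.gcd fun i => (w (Pi.single i 1)).val).gcd n
  have hgn : g ∣ n := Nat.gcd_dvd_right _ _
  have hkill : (n / g) • w = 0 := by
    ext i
    have hg : g ∣ (w (Pi.single i 1)).val :=
      (Nat.gcd_dvd_left _ _).trans
        (Finset.gcd_dvd (f := fun i => (w (Pi.single i 1)).val) (mem_univ i))
    have : ((n / g * (w (Pi.single i 1)).val : ℕ) : ZMod n) = 0 := by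
      rw [ZMod.natCast_eq_zero_iff]
      simpa only [Nat.div_mul_cancel hgn] using Nat.mul_dvd_mul_left (n / g) hg
    simpa [nsmul_eq_mul] using this
  have hdvd : n ∣ n / g := by
    simpa only [hw] using addOrderOf_dvd_of_nsmul_eq_zero hkill
  exact (Nat.div_eq_self.mp (Nat.dvd_antisymm (Nat.div_dvd_of_dvd hgn) hdvd)).resolve_left
    (NeZero.ne n)

theorem AddMonoidHom.apply_eq_intCast_dotProduct {ι R : Type*} [Fintype ι] [DecidableEq ι]
    [Ring R] (w : (ι → ℤ) →+ R) {c : ι → ℤ} (hc : ∀ i, (c i : R) = w (Pi.single i 1))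
    (x : ι → ℤ) : w x = ((c ⬝ᵥ x : ℤ) : R) := by
  conv_lhs => rw [← Finset.univ_sum_single x]
  simp only [map_sum, dotProduct, Int.cast_sum, Int.cast_mul, hc]
  refine Finset.sum_congr rfl fun i _ => ?_
  rw [← Int.cast_comm, ← zsmul_eq_mul, ← map_zsmul, ← Pi.single_smul, smul_eq_mul, mul_one]

theorem Matrix.IsSymm.inv_mulVec_dotProduct_mulVec {m R : Type*} [Fintype m] [DecidableEq m]
    [CommRing R] {A : Matrix m m R} (hA : A.IsSymm) (hdet : IsUnit A.det) (u y : m → R) :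
    (A⁻¹ *ᵥ u) ⬝ᵥ (A *ᵥ y) = u ⬝ᵥ y := by
  rw [dotProduct_mulVec, ← hA.eq, vecMul_transpose, hA.eq, mulVec_mulVec,
    mul_nonsing_inv _ hdet, one_mulVec]

noncomputable section

/-- The `ℚ`-bilinear extension `⟨a,b⟩ = aᵀ · S · b` to `ℚ³` of the bilinear form of the
`ℤ`-lattice `ℤ³` with Gram matrix `S`. -/
def latticeFormQ (S : Matrix (Fin 3) (Fin 3) ℤ) (a b : Fin 3 → ℚ) : ℚ :=
  a ⬝ᵥ (S.map (Int.cast : ℤ → ℚ)).mulVec b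

/-- The inclusion `ℤ³ → ℚ³`. -/
def intVecQ (x : Fin 3 → ℤ) : Fin 3 → ℚ := fun i => (x i : ℚ)

theorem latticeFormQ_inv_mulVec_intVecQ {S : Matrix (Fin 3) (Fin 3) ℤ} (hS : S.IsSymm)
    (hdet : S.det ≠ 0) (c x : Fin 3 → ℤ) :
    latticeFormQ S ((S.map (Int.cast : ℤ → ℚ))⁻¹ *ᵥ intVecQ c) (intVecQ x) =
      ((c ⬝ᵥ x : ℤ) : ℚ) := by
  have hdetQ : IsUnit (S.map (Int.cast : ℤ → ℚ)).det := by
    rw [← Int.cast_det, isUnit_iff_ne_zero]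
    exact_mod_cast hdet
  rw [latticeFormQ, (hS.map _).inv_mulVec_dotProduct_mulVec hdetQ, dotProduct, dotProduct]
  push_cast
  rfl

theorem dvd_of_latticeFormQ_inv_smul_integral {S : Matrix (Fin 3) (Fin 3) ℤ}
    {v : Fin 3 → ℚ} {c : Fin 3 → ℤ}
    (hv : ∀ x, latticeFormQ S v (intVecQ x) = ((c ⬝ᵥ x : ℤ) : ℚ)) {p : ℕ} (hp : p ≠ 0)
    (hdual : ∀ x, ∃ k : ℤ, latticeFormQ S ((p : ℚ)⁻¹ • v) (intVecQ x) = k) (i : Fin 3) :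
    (p : ℤ) ∣ c i := by
  obtain ⟨k, hk⟩ := hdual (Pi.single i 1)
  rw [latticeFormQ, smul_dotProduct, ← latticeFormQ, hv, smul_eq_mul,
    inv_mul_eq_iff_eq_mul₀ (by exact_mod_cast hp), dotProduct_single_one] at hk
  exact ⟨k, by exact_mod_cast hk⟩

/-- **Homomorphisms to `ℤ/nℤ` of exact order `n` come from primitive dual vectors.**
Let `Π = ℤ³` carry a nondegenerate symmetric bilinear form with Gram matrix `S`, extended
`ℚ`-bilinearly to `ℚ³`.  If `w : Π →+ ℤ/nℤ` has order exactly `n` in `Hom(Π, ℤ/nℤ)`,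
then there is a primitive element `v` of the dual lattice
`Π^∨ = {v : ⟨v,x⟩ ∈ ℤ for all x ∈ Π}` (so `v ≠ 0` and `v/p ∉ Π^∨` for every prime `p`)
with `w x = ⟨v,x⟩ mod n` for all `x ∈ Π`. -/
theorem exact_order_hom_eq_pairing_with_primitive_dual_vector
    (S : Matrix (Fin 3) (Fin 3) ℤ) (hSsymm : S.IsSymm) (hSdet : S.det ≠ 0)
    (n : ℕ) (hn : 1 ≤ n)
    (w : (Fin 3 → ℤ) →+ ZMod n) (hw : addOrderOf w = n) :
    ∃ v : Fin 3 → ℚ,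
      (∀ x : Fin 3 → ℤ, ∃ k : ℤ, latticeFormQ S v (intVecQ x) = (k : ℚ)) ∧
      v ≠ 0 ∧
      (∀ p : ℕ, p.Prime →
        ¬ ∀ x : Fin 3 → ℤ, ∃ k : ℤ, latticeFormQ S ((p : ℚ)⁻¹ • v) (intVecQ x) = (k : ℚ)) ∧
      ∀ x : Fin 3 → ℤ, ∃ k : ℤ,
        latticeFormQ S v (intVecQ x) = (k : ℚ) ∧ w x = (k : ZMod n) := by
  have : NeZero n := ⟨by omega⟩
  obtain ⟨c, hc, hgcd⟩ := Nat.exists_modEq_and_univ_gcd_eq_one (NeZero.ne n) _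
    (w.coprime_gcd_val_of_addOrderOf_eq hw)
  set v := (S.map (Int.cast : ℤ → ℚ))⁻¹ *ᵥ intVecQ fun i => (c i : ℤ)
  have hpair := latticeFormQ_inv_mulVec_intVecQ hSsymm hSdet fun i => (c i : ℤ)
  have hprim : ∀ p : ℕ, p.Prime →
      ¬ ∀ x, ∃ k : ℤ, latticeFormQ S ((p : ℚ)⁻¹ • v) (intVecQ x) = k := by
    intro p hp hdual
    have hdvd : ∀ i, p ∣ c i := fun i => Int.natCast_dvd_natCast.mp
      (dvd_of_latticeFormQ_inv_smul_integral hpair hp.ne_zero hdual i)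
    exact hp.one_lt.ne' (Nat.dvd_one.mp (hgcd ▸ Finset.dvd_gcd fun i _ => hdvd i))
  refine ⟨v, fun x => ⟨_, hpair x⟩, ?_, hprim, fun x => ⟨_, hpair x, ?_⟩⟩
  · intro hv
    exact hprim 2 Nat.prime_two fun x => ⟨0, by simp [hv, latticeFormQ]⟩
  · refine w.apply_eq_intCast_dotProduct (fun i => ?_) x
    rw [Int.cast_natCast, (ZMod.natCast_eq_natCast_iff _ _ _).mpr (hc i), ZMod.natCast_zmod_val]

end
end
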